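/- The symmetric bilinear form q = ω₁² + ω₂² + ω₃² − α₁² + β₁² + β₂² + β₃² + γ₁² + γ₂² + γ₃² on so(5) (with respect to the graded basis {X₁,X₂,X₃, A₁, B₁,B₂,B₃, C₁,C₂,C₃}) is nondegenerate of signature (1,9), and its restriction to m = g_a ⊕ g_b ⊕ g_c is a Lorentzian form (signature (1,6)) that is ad(g_e)-invariant, where g_e ≅ so(3) sits as the lower-right 3×3 block. -/

import Mathlib

open Matrix

/-- Elementary skew-symmetric matrix: `1` at `(i,j)`, `-1` at `(j,i)` (0-based indices). -/
def E (i j : Fin 5) : Matrix (Fin 5) (Fin 5) ℝ :=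
  Matrix.single i j 1 - Matrix.single j i 1

/-- `so(5)`: the skew-symmetric `5×5` real matrices. -/
def so5 : Submodule ℝ (Matrix (Fin 5) (Fin 5) ℝ) where
  carrier := {X | Xᵀ = -X}
  add_mem' := by
    rintro a b ha hb
    show (a + b)ᵀ = -(a + b)
    rw [transpose_add, ha, hb]; abel
  zero_mem' := by simp
  smul_mem' := by
    rintro c X h
    show (c • X)ᵀ = -(c • X)
    rw [transpose_smul, h, smul_neg]

/-- `g_e = span{X₁,X₂,X₃}`, the lower-right `so(3)`-block (0-based entries
`(2,3), (2,4), (3,4)`). -/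
noncomputable def ge : Submodule ℝ (Matrix (Fin 5) (Fin 5) ℝ) :=
  Submodule.span ℝ {E 2 3, E 2 4, E 3 4}

/-- `m = g_a ⊕ g_b ⊕ g_c = span{A₁, B₁, B₂, B₃, C₁, C₂, C₃}`, with
`A₁ = E 0 1`, `Bᵢ = E 0 (i+1)`, `Cᵢ = E 1 (i+1)`. -/
noncomputable def mm : Submodule ℝ (Matrix (Fin 5) (Fin 5) ℝ) :=
  Submodule.span ℝ {E 0 1, E 0 2, E 0 3, E 0 4, E 1 2, E 1 3, E 1 4}

/-- The symmetric bilinear form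
`q = ω₁² + ω₂² + ω₃² - α₁² + β₁² + β₂² + β₃² + γ₁² + γ₂² + γ₃²`
in the coordinates given by the graded basis (upper-triangular entries). -/
def q (X Y : Matrix (Fin 5) (Fin 5) ℝ) : ℝ :=
  X 2 3 * Y 2 3 + X 2 4 * Y 2 4 + X 3 4 * Y 3 4
  - X 0 1 * Y 0 1
  + X 0 2 * Y 0 2 + X 0 3 * Y 0 3 + X 0 4 * Y 0 4
  + X 1 2 * Y 1 2 + X 1 3 * Y 1 3 + X 1 4 * Y 1 4

/-! On skew-symmetric matrices `q X Y = -tr (X * Y) / 2 - 2 α₁(X) α₁(Y)`: the positive definite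
trace form, corrected along `A₁`. The trace form is `ad`-invariant on all of `gl(5)`, and `α₁`
vanishes on `[g_e, so(5)]` because `g_e` lives in the lower-right block; this gives invariance.
Off `A₁`, `q X X = tr (Xᵀ * X) / 2 > 0`. Nondegeneracy holds because `q X (E i j) = ± X i j` for
`i < j`, and for `m` the only coordinates not detected this way are those of the `g_e`-block,
which vanish on `m`. -/

namespace Matrix

variable {n R : Type*} {X : Matrix n n R}

theorem apply_eq_neg_of_transpose_eq_neg [Neg R] (hX : Xᵀ = -X) (i j : n) : X j i = -X i j :=
  congr_fun₂ hX i j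

theorem apply_self_eq_zero_of_transpose_eq_neg [AddGroup R] [IsAddTorsionFree R]
    (hX : Xᵀ = -X) (i : n) : X i i = 0 :=
  self_eq_neg.mp (apply_eq_neg_of_transpose_eq_neg hX i i)

theorem eq_zero_of_transpose_eq_neg_of_forall_lt [LinearOrder n] [AddGroup R] [IsAddTorsionFree R]
    (hX : Xᵀ = -X) (h : ∀ i j, i < j → X i j = 0) : X = 0 := by
  ext i j
  rcases lt_trichotomy i j with hij | rfl | hji
  · exact h i j hij
  · exact apply_self_eq_zero_of_transpose_eq_neg hX i
  · rw [apply_eq_neg_of_transpose_eq_neg hX j i, h j i hji, neg_zero, zero_apply]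

theorem apply_eq_zero_of_mem_span {m : Type*} [Semiring R] {S : Set (Matrix m n R)}
    {Y : Matrix m n R} (hY : Y ∈ Submodule.span R S) {i : m} {j : n}
    (hS : ∀ Z ∈ S, Z i j = 0) : Y i j = 0 :=
  (Submodule.span_le (p := LinearMap.ker (entryLinearMap R R i j))).2 hS hY

theorem trace_lie_mul_add_trace_mul_lie [Fintype n] [CommRing R] (X Y Z : Matrix n n R) :
    (⁅X, Y⁆ * Z).trace + (Y * ⁅X, Z⁆).trace = 0 := by
  simp only [Ring.lie_def, sub_mul, mul_sub, trace_sub, Matrix.mul_assoc]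
  rw [trace_mul_cycle' Y Z X]
  abel

end Matrix

lemma E_apply (i j a b : Fin 5) :
    E i j a b = (if i = a ∧ j = b then 1 else 0) - (if j = a ∧ i = b then 1 else 0) := by
  simp [E, Matrix.single, and_comm]

lemma E_mem_so5 (i j : Fin 5) : E i j ∈ so5 := by
  change (E i j)ᵀ = -E i j
  simp [E, sub_eq_neg_add]

lemma lie_mem_so5 {X Y : Matrix (Fin 5) (Fin 5) ℝ} (hX : X ∈ so5) (hY : Y ∈ so5) :
    ⁅X, Y⁆ ∈ so5 := by
  change (X * Y - Y * X)ᵀ = -(X * Y - Y * X)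
  rw [transpose_sub, transpose_mul, transpose_mul, hX, hY]
  noncomm_ring

lemma ge_le_so5 : ge ≤ so5 :=
  Submodule.span_le.2 <| by rintro _ (rfl | rfl | rfl) <;> apply E_mem_so5

lemma mm_le_so5 : mm ≤ so5 :=
  Submodule.span_le.2 <| by
    rintro _ (rfl | rfl | rfl | rfl | rfl | rfl | rfl) <;> apply E_mem_so5

lemma ge_apply_eq_zero {X : Matrix (Fin 5) (Fin 5) ℝ} (hX : X ∈ ge) {i j : Fin 5}
    (h : i.val < 2 ∨ j.val < 2) : X i j = 0 :=
  Matrix.apply_eq_zero_of_mem_span hX <| by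
    rintro _ (rfl | rfl | rfl) <;> fin_cases i <;> fin_cases j <;> simp_all [E_apply]

lemma mm_apply_eq_zero {X : Matrix (Fin 5) (Fin 5) ℝ} (hX : X ∈ mm) {i j : Fin 5}
    (hi : 2 ≤ i.val) (hj : 2 ≤ j.val) : X i j = 0 :=
  Matrix.apply_eq_zero_of_mem_span hX <| by
    rintro _ (rfl | rfl | rfl | rfl | rfl | rfl | rfl) <;> fin_cases i <;> fin_cases j <;>
      simp_all [E_apply]

lemma E_mem_mm {i j : Fin 5} (hi : i.val < 2) (hij : i < j) : E i j ∈ mm := by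
  apply Submodule.subset_span
  fin_cases i <;> fin_cases j <;> simp_all

lemma q_E_eq_zero_iff (X : Matrix (Fin 5) (Fin 5) ℝ) {i j : Fin 5} (hij : i < j) :
    q X (E i j) = 0 ↔ X i j = 0 := by
  fin_cases i <;> fin_cases j <;> simp_all [q, E_apply]

lemma q_eq_trace {X Y : Matrix (Fin 5) (Fin 5) ℝ} (hX : X ∈ so5) (hY : Y ∈ so5) :
    q X Y = -(X * Y).trace / 2 - 2 * X 0 1 * Y 0 1 := by
  have hXt := Matrix.apply_eq_neg_of_transpose_eq_neg hX
  have hYt := Matrix.apply_eq_neg_of_transpose_eq_neg hY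
  simp only [q, trace, diag, mul_apply, Fin.sum_univ_five,
    Matrix.apply_self_eq_zero_of_transpose_eq_neg hX, hXt 0 1, hXt 0 2, hXt 0 3, hXt 0 4,
    hXt 1 2, hXt 1 3, hXt 1 4, hXt 2 3, hXt 2 4, hXt 3 4, hYt 0 1, hYt 0 2, hYt 0 3, hYt 0 4,
    hYt 1 2, hYt 1 3, hYt 1 4, hYt 2 3, hYt 2 4, hYt 3 4]
  ring

lemma lie_apply_zero_one {X : Matrix (Fin 5) (Fin 5) ℝ} (hX : X ∈ ge)
    (Y : Matrix (Fin 5) (Fin 5) ℝ) : ⁅X, Y⁆ 0 1 = 0 := by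
  simp [Ring.lie_def, mul_apply, ge_apply_eq_zero hX]

lemma q_lie_add_q_lie {X Y Z : Matrix (Fin 5) (Fin 5) ℝ} (hX : X ∈ ge) (hY : Y ∈ so5)
    (hZ : Z ∈ so5) : q ⁅X, Y⁆ Z + q Y ⁅X, Z⁆ = 0 := by
  have hXs := ge_le_so5 hX
  rw [q_eq_trace (lie_mem_so5 hXs hY) hZ, q_eq_trace hY (lie_mem_so5 hXs hZ),
    lie_apply_zero_one hX, lie_apply_zero_one hX]
  linear_combination -(Matrix.trace_lie_mul_add_trace_mul_lie X Y Z) / 2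

lemma q_self_pos {X : Matrix (Fin 5) (Fin 5) ℝ} (hX : X ∈ so5) (hX0 : X ≠ 0) (h01 : X 0 1 = 0) :
    0 < q X X := by
  have hq : q X X = (Xᴴ * X).trace / 2 := by
    rw [q_eq_trace hX hX, h01, conjTranspose_eq_transpose_of_trivial, show Xᵀ = -X from hX,
      neg_mul, trace_neg]
    ring
  have hpos : 0 < (Xᴴ * X).trace :=
    (posSemidef_conjTranspose_mul_self X).trace_nonneg.lt_of_ne'
      (trace_conjTranspose_mul_self_eq_zero_iff.not.2 hX0)
  linarith

lemma q_smul_E_zero_one (c : ℝ) : q (c • E 0 1) (c • E 0 1) = -c ^ 2 := by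
  simp [q, E_apply, sq]

lemma eq_zero_of_forall_q_so5_eq_zero {X : Matrix (Fin 5) (Fin 5) ℝ} (hX : X ∈ so5)
    (hq : ∀ Y ∈ so5, q X Y = 0) : X = 0 :=
  eq_zero_of_transpose_eq_neg_of_forall_lt hX fun i j hij =>
    (q_E_eq_zero_iff X hij).1 (hq _ (E_mem_so5 i j))

lemma eq_zero_of_forall_q_mm_eq_zero {X : Matrix (Fin 5) (Fin 5) ℝ} (hX : X ∈ mm)
    (hq : ∀ Y ∈ mm, q X Y = 0) : X = 0 := by
  refine eq_zero_of_transpose_eq_neg_of_forall_lt (mm_le_so5 hX) fun i j hij => ?_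
  by_cases hi : i.val < 2
  · exact (q_E_eq_zero_iff X hij).1 (hq _ (E_mem_mm hi hij))
  · exact mm_apply_eq_zero hX (by omega) (by omega)

/-- The form `q` is nondegenerate on `so(5)` of Lorentz-type signature `(1,9)`
(negative exactly on the line `ℝ·A₁`, positive definite on the orthogonal
complement of `A₁`), its restriction to `m` is nondegenerate of signature `(1,6)`,
and this restriction is `ad(g_e)`-invariant. -/
theorem lorentzian_form_so5 :
    (∀ X ∈ so5, (∀ Y ∈ so5, q X Y = 0) → X = 0) ∧
    (∀ X ∈ so5, X ≠ 0 → X 0 1 = 0 → 0 < q X X) ∧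
    (∀ c : ℝ, c ≠ 0 → q (c • E 0 1) (c • E 0 1) < 0) ∧
    (E 0 1 ∈ mm) ∧
    (∀ X ∈ mm, (∀ Y ∈ mm, q X Y = 0) → X = 0) ∧
    (∀ X ∈ ge, ∀ Y ∈ mm, ∀ Z ∈ mm, q ⁅X, Y⁆ Z + q Y ⁅X, Z⁆ = 0) := by
  refine ⟨fun X hX hq => eq_zero_of_forall_q_so5_eq_zero hX hq,
    fun X hX hX0 h01 => q_self_pos hX hX0 h01, fun c hc => ?_, E_mem_mm (by decide) (by decide),
    fun X hX hq => eq_zero_of_forall_q_mm_eq_zero hX hq,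
    fun X hX Y hY Z hZ => q_lie_add_q_lie hX (mm_le_so5 hY) (mm_le_so5 hZ)⟩
  rw [q_smul_E_zero_one]
  exact neg_neg_of_pos (by positivity)
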